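/- Let n ≥ 4 be an integer. For all integers j, j' with 3 ≤ j ≤ n − 1 and 3 ≤ j' ≤ n − 1, the digraphs D(j) and D(j') have the same complementarity spectrum: Π(D(j)) = Π(D(j')). -/

import Mathlib

set_option maxHeartbeats 1000000


open Matrix Polynomial
open Fin.NatCast

/-- `lam` is a complementarity eigenvalue of the real square matrix `A`. -/
def isComplEig {V : Type*} [Fintype V] (A : Matrix V V ℝ) (lam : ℝ) : Prop :=
  ∃ x : V → ℝ, x ≠ 0 ∧ 0 ≤ x ∧ 0 ≤ A.mulVec x - lam • x ∧
    ∑ i, x i * (A.mulVec x - lam • x) i = 0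

-- Adjacency matrix of a digraph given by its arc relation.
open scoped Classical in
noncomputable def adjMat {V : Type*} (adj : V → V → Prop) : Matrix V V ℝ :=
  Matrix.of fun i j => if adj i j then 1 else 0

/-- Arc relation of the digraph `D(j)` (with vertices `1, …, n` of the paper encoded as
`0, …, n-1`): the directed `n`-cycle `0 → 1 → ⋯ → n-1 → 0` together with the two extra
arcs `(2,1)` and `(j+1,j)` of the paper, i.e. `(1,0)` and `(j, j-1)` in this encoding. -/
def Dj (n j : ℕ) : Fin n → Fin n → Prop := fun i k =>
  (k.val = i.val + 1) ∨
  (i.val = n - 1 ∧ k.val = 0) ∨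
  (i.val = 1 ∧ k.val = 0) ∨
  (i.val = j ∧ k.val = j - 1)

lemma mulVec_formula (n j : ℕ) [NeZero n] (hn : 4 ≤ n) (hj1 : 3 ≤ j) (hj2 : j ≤ n - 1)
    (x : Fin n → ℝ) (i : Fin n) :
    (adjMat (Dj n j)).mulVec x i =
      x (i + 1) + (if i.val = 1 then x ⟨0, by omega⟩ else 0)
        + (if i.val = j then x ⟨j - 1, by omega⟩ else 0) := by
  classical
  have hiv := i.isLt
  have hadd : (i + 1 : Fin n) = ⟨(i.val + 1) % n, Nat.mod_lt _ (by omega)⟩ := by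
    rw [Fin.add_def]; congr 1
    have h1 : (1 : Fin n).val = 1 := by
      rw [Fin.val_one']; exact Nat.mod_eq_of_lt (by omega)
    rw [h1]
  have hmod : (i.val + 1) % n = if i.val = n - 1 then 0 else i.val + 1 := by
    split
    · have : i.val + 1 = n := by omega
      rw [this, Nat.mod_self]
    · exact Nat.mod_eq_of_lt (by omega)
  have hvadd : ((i + 1 : Fin n) : ℕ) = if i.val = n - 1 then 0 else i.val + 1 := by
    rw [hadd]; exact hmod
  have h1 : ∀ k : Fin n, Dj n j i k ↔ (k = i + 1 ∨ (i.val = 1 ∧ k.val = 0)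
      ∨ (i.val = j ∧ k.val = j - 1)) := by
    intro k
    have hk := k.isLt
    have hke : (k = i + 1) ↔ (k.val = (i+1 : Fin n).val) := Fin.ext_iff
    rw [hke, hvadd]
    unfold Dj
    split <;> omega
  have hstart : (adjMat (Dj n j)).mulVec x i
      = ∑ k ∈ Finset.univ.filter (fun k => Dj n j i k), x k := by
    rw [Finset.sum_filter]
    simp [Matrix.mulVec, dotProduct, adjMat, ite_mul]
  rw [hstart]
  by_cases hA : i.val = 1
  · have hfil : Finset.univ.filter (fun k => Dj n j i k)
        = {i + 1, (⟨0, by omega⟩ : Fin n)} := by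
      ext k
      simp only [Finset.mem_filter, Finset.mem_univ, true_and, h1 k,
        Finset.mem_insert, Finset.mem_singleton, Fin.ext_iff]
      have hk := k.isLt
      rw [hvadd]
      split <;> omega
    rw [hfil, Finset.sum_pair]
    · have hAj : (1:ℕ) ≠ j := by omega
      simp [hA, hAj]
    · simp only [ne_eq, Fin.ext_iff, hvadd]
      split <;> simp <;> omega
  · by_cases hB : i.val = j
    · have hfil : Finset.univ.filter (fun k => Dj n j i k)
          = {i + 1, (⟨j - 1, by omega⟩ : Fin n)} := by
        ext k
        simp only [Finset.mem_filter, Finset.mem_univ, true_and, h1 k,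
          Finset.mem_insert, Finset.mem_singleton, Fin.ext_iff]
        have hk := k.isLt
        rw [hvadd]
        split <;> omega
      rw [hfil, Finset.sum_pair]
      · have hBj : j ≠ 1 := by omega
        simp [hA, hB, hBj]
      · simp only [ne_eq, Fin.ext_iff, hvadd]
        split <;> omega
    · have hfil : Finset.univ.filter (fun k => Dj n j i k) = {i + 1} := by
        ext k
        simp only [Finset.mem_filter, Finset.mem_univ, true_and, h1 k,
          Finset.mem_singleton]
        have hk := k.isLt
        constructor
        · rintro (h | h | h)
          · exact h
          · omega
          · omega
        · exact fun h => Or.inl h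
      rw [hfil, Finset.sum_singleton]
      simp [hA, hB]


lemma natCast_succ' (n : ℕ) [NeZero n] (m : ℕ) :
    ((m : Fin n) + 1) = ((m + 1 : ℕ) : Fin n) := by
  push_cast
  ring

lemma mulVec_formulaN (n j : ℕ) [NeZero n] (hn : 4 ≤ n) (hj1 : 3 ≤ j) (hj2 : j ≤ n - 1)
    (x : Fin n → ℝ) (m : ℕ) :
    (adjMat (Dj n j)).mulVec x ((m : Fin n)) =
      x ((m + 1 : ℕ) : Fin n) + (if m % n = 1 then x ((0 : ℕ) : Fin n) else 0)
        + (if m % n = j then x ((j - 1 : ℕ) : Fin n) else 0) := by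
  rw [mulVec_formula n j hn hj1 hj2 x (m : Fin n)]
  have h0 : (⟨0, by omega⟩ : Fin n) = ((0 : ℕ) : Fin n) := by
    ext; simp
  have hj' : (⟨j - 1, by omega⟩ : Fin n) = ((j - 1 : ℕ) : Fin n) := by
    ext
    rw [Fin.val_natCast]
    exact (Nat.mod_eq_of_lt (by omega)).symm
  have hv : ((m : Fin n) : ℕ) = m % n := Fin.val_natCast m n
  rw [h0, hj', hv, natCast_succ']

lemma mulVec_nonneg {n : ℕ} (adj : Fin n → Fin n → Prop) (x : Fin n → ℝ)
    (hx : ∀ i, 0 ≤ x i) (i : Fin n) : 0 ≤ (adjMat adj).mulVec x i := by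
  classical
  simp only [Matrix.mulVec, dotProduct]
  apply Finset.sum_nonneg
  intro k _
  have : (0:ℝ) ≤ adjMat adj i k := by
    unfold adjMat
    simp only [Matrix.of_apply]
    split <;> norm_num
  exact mul_nonneg this (hx k)


section Bwd

variable {n j : ℕ}

lemma bwd0 (n j : ℕ) (hn : 4 ≤ n) (hj1 : 3 ≤ j) (hj2 : j ≤ n - 1) :
    isComplEig (adjMat (Dj n j)) (0:ℝ) := by
  haveI : NeZero n := ⟨by omega⟩
  classical
  set x : Fin n → ℝ := fun k => if k = ((0:ℕ) : Fin n) then 1 else 0 with hxdef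
  have hxnn : ∀ k, 0 ≤ x k := by
    intro k; rw [hxdef]; dsimp; split <;> norm_num
  refine ⟨x, ?_, ?_, ?_, ?_⟩
  · intro hc
    have := congrFun hc ((0:ℕ) : Fin n)
    simp [hxdef] at this
  · rw [Pi.le_def]
    intro k
    simpa using hxnn k
  · rw [Pi.le_def]
    intro i
    have h0 := mulVec_nonneg (Dj n j) x hxnn i
    simpa using h0
  · apply Finset.sum_eq_zero
    intro i _
    by_cases hi : i = ((0:ℕ) : Fin n)
    · subst hi
      have hm := mulVec_formulaN n j hn hj1 hj2 x 0
      have h0n : (0:ℕ) % n = 0 := Nat.mod_eq_of_lt (by omega)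
      rw [h0n, if_neg (by omega), if_neg (by omega)] at hm
      have hx1 : x ((0 + 1 : ℕ) : Fin n) = 0 := by
        rw [hxdef]; dsimp
        rw [if_neg]
        intro hc
        have := congrArg Fin.val hc
        rw [Fin.val_natCast, Fin.val_natCast] at this
        rw [Nat.mod_eq_of_lt (by omega), Nat.mod_eq_of_lt (by omega)] at this
        omega
      rw [hx1] at hm
      have hc0 : ((0:ℕ) : Fin n) = (0 : Fin n) := by ext; simp
      rw [hc0] at hm
      simp [hm]
    · have : x i = 0 := by rw [hxdef]; dsimp; rw [if_neg hi]
      simp [this]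

lemma bwd1 (n j : ℕ) (hn : 4 ≤ n) (hj1 : 3 ≤ j) (hj2 : j ≤ n - 1) :
    isComplEig (adjMat (Dj n j)) (1:ℝ) := by
  haveI : NeZero n := ⟨by omega⟩
  classical
  set x : Fin n → ℝ := fun k => if (k:ℕ) ≤ 1 then 1 else 0 with hxdef
  have hxnn : ∀ k, 0 ≤ x k := by
    intro k; rw [hxdef]; dsimp; split <;> norm_num
  have hvc : ∀ m : ℕ, m < n → ((m : Fin n) : ℕ) = m := by
    intro m hm; rw [Fin.val_natCast]; exact Nat.mod_eq_of_lt hm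
  have hxm : ∀ m : ℕ, m < n → x ((m : ℕ) : Fin n) = if m ≤ 1 then 1 else 0 := by
    intro m hm
    have h' : x ((m : ℕ) : Fin n) = if (((m : ℕ) : Fin n) : ℕ) ≤ 1 then 1 else 0 := rfl
    rw [h', hvc m hm]
  -- the key: pointwise value of mulVec x - x
  have hw : ∀ i : Fin n, (adjMat (Dj n j)).mulVec x i - x i
      = if (i:ℕ) ≤ 1 then 0 else (adjMat (Dj n j)).mulVec x i := by
    intro i
    have hiv := i.isLt
    have hcast : ((i.val : ℕ) : Fin n) = i := Fin.cast_val_eq_self i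
    have hm := mulVec_formulaN n j hn hj1 hj2 x i.val
    rw [hcast] at hm
    rw [Nat.mod_eq_of_lt hiv] at hm
    by_cases h0 : (i:ℕ) = 0
    · rw [if_pos (by omega)]
      rw [h0, if_neg (by omega), if_neg (by omega)] at hm
      rw [hxm 1 (by omega)] at hm
      have hxi : x i = 1 := by
        have h' : ((0:ℕ) : Fin n) = i := by
          rw [← hcast]
          congr 1
          omega
        rw [← h', hxm 0 (by omega)]
        norm_num
      rw [hm, hxi]
      norm_num
    · by_cases h1 : (i:ℕ) = 1
      · rw [if_pos (by omega)]
        rw [h1, if_pos rfl, if_neg (by omega)] at hm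
        rw [hxm 2 (by omega), hxm 0 (by omega)] at hm
        have hxi : x i = 1 := by
          have h' : ((1:ℕ) : Fin n) = i := by
            rw [← hcast]
            congr 1
            omega
          rw [← h', hxm 1 (by omega)]
          norm_num
        rw [hm, hxi]
        norm_num
      · rw [if_neg (by omega)]
        have : x i = 0 := by
          rw [← hcast, hxm i.val hiv, if_neg (by omega)]
        rw [this, sub_zero]
  refine ⟨x, ?_, ?_, ?_, ?_⟩
  · intro hc
    have := congrFun hc ((0:ℕ) : Fin n)
    rw [hxm 0 (by omega)] at this
    simp at this
  · rw [Pi.le_def]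
    intro k
    simpa using hxnn k
  · rw [Pi.le_def]
    intro i
    simp only [Pi.sub_apply, Pi.smul_apply, smul_eq_mul, one_mul, Pi.zero_apply]
    rw [hw i]
    split
    · exact le_rfl
    · exact mulVec_nonneg (Dj n j) x hxnn i
  · apply Finset.sum_eq_zero
    intro i _
    simp only [Pi.sub_apply, Pi.smul_apply, smul_eq_mul, one_mul]
    rw [hw i]
    split
    · ring
    · have : x i = 0 := by
        have hcast : ((i.val : ℕ) : Fin n) = i := Fin.cast_val_eq_self i
        rw [← hcast, hxm i.val i.isLt, if_neg (by omega)]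
      rw [this]; ring

end Bwd


lemma bwdRoot (n j : ℕ) (hn : 4 ≤ n) (hj1 : 3 ≤ j) (hj2 : j ≤ n - 1) (lam : ℝ)
    (hl : 1 < lam) (heq : (lam ^ 2 - 1) ^ 2 * lam ^ (n - 4) = 1) :
    isComplEig (adjMat (Dj n j)) lam := by
  haveI : NeZero n := ⟨by omega⟩
  classical
  have hl0 : (0:ℝ) < lam := by linarith
  have hq : (0:ℝ) < lam ^ 2 - 1 := by nlinarith
  set g : ℕ → ℝ := fun m =>
    if m = 0 then 1 else if m = 1 then lam
    else if m ≤ j then (lam ^ 2 - 1) * lam ^ (m - 2)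
    else (lam ^ 2 - 1) ^ 2 * lam ^ (m - 4) with hgdef
  have hg0 : g 0 = 1 := by rw [hgdef]; norm_num
  have hg1 : g 1 = lam := by rw [hgdef]; norm_num
  have hgmid : ∀ m, 2 ≤ m → m ≤ j → g m = (lam ^ 2 - 1) * lam ^ (m - 2) := by
    intro m h2 h3
    rw [hgdef]
    dsimp
    rw [if_neg (by omega), if_neg (by omega), if_pos h3]
  have hghigh : ∀ m, j < m → g m = (lam ^ 2 - 1) ^ 2 * lam ^ (m - 4) := by
    intro m h2
    rw [hgdef]
    dsimp
    rw [if_neg (by omega), if_neg (by omega), if_neg (by omega)]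
  have hgpos : ∀ m, 0 < g m := by
    intro m
    rw [hgdef]; dsimp
    split
    · norm_num
    · split
      · linarith
      · split
        · positivity
        · positivity
  set x : Fin n → ℝ := fun i => g i.val with hxdef
  have hxv : ∀ m : ℕ, x ((m : ℕ) : Fin n) = g (m % n) := by
    intro m
    have h' : x ((m : ℕ) : Fin n) = g (((m : ℕ) : Fin n) : ℕ) := rfl
    rw [h', Fin.val_natCast]
  have key : ∀ i : Fin n, (adjMat (Dj n j)).mulVec x i = lam * x i := by
    rintro ⟨m, hmlt⟩
    have hcast : ((m : ℕ) : Fin n) = ⟨m, hmlt⟩ := by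
      ext
      rw [Fin.val_natCast]
      exact Nat.mod_eq_of_lt hmlt
    have hm := mulVec_formulaN n j hn hj1 hj2 x m
    rw [hcast, Nat.mod_eq_of_lt hmlt] at hm
    rw [hxv (m + 1), hxv 0, hxv (j - 1)] at hm
    rw [show (0:ℕ) % n = 0 from Nat.mod_eq_of_lt (by omega),
      show (j-1) % n = j - 1 from Nat.mod_eq_of_lt (by omega)] at hm
    have hxi : x ⟨m, hmlt⟩ = g m := rfl
    rw [hm, hxi]
    by_cases hc1 : m = 0
    · subst hc1
      rw [show (0+1) % n = 1 from Nat.mod_eq_of_lt (by omega)]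
      rw [if_neg (by omega), if_neg (by omega), hg0, hg1]
      ring
    by_cases hc2 : m = 1
    · subst hc2
      rw [show (1+1) % n = 2 from Nat.mod_eq_of_lt (by omega)]
      rw [if_pos rfl, if_neg (by omega), hg0, hg1, hgmid 2 (by omega) (by omega)]
      rw [show (2:ℕ) - 2 = 0 from rfl, pow_zero]
      ring
    by_cases hc3 : m < j
    · rw [show (m+1) % n = m + 1 from Nat.mod_eq_of_lt (by omega)]
      rw [if_neg hc2, if_neg (by omega), hgmid (m+1) (by omega) (by omega),
        hgmid m (by omega) (by omega)]
      rw [show m + 1 - 2 = (m - 2) + 1 by omega, pow_succ]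
      ring
    by_cases hc4 : m = j
    · subst hc4
      rw [if_neg hc2, if_pos rfl]
      rw [hgmid (m - 1) (by omega) (by omega), hgmid m (by omega) (by omega)]
      by_cases hc5 : m = n - 1
      · rw [show (m+1) % n = 0 by rw [show m + 1 = n by omega]; exact Nat.mod_self n]
        rw [hg0]
        rw [show m - 1 - 2 = n - 4 by omega, show m - 2 = (n - 4) + 1 by omega, pow_succ]
        linear_combination -heq
      · rw [show (m+1) % n = m + 1 from Nat.mod_eq_of_lt (by omega)]
        rw [hghigh (m+1) (by omega)]
        rw [show m + 1 - 4 = (m - 3) from by omega, show m - 1 - 2 = m - 3 from by omega,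
          show m - 2 = (m - 3) + 1 from by omega, pow_succ]
        ring
    -- now j < m
    rw [if_neg hc2, if_neg hc4, hghigh m (by omega)]
    by_cases hc6 : m = n - 1
    · rw [show (m+1) % n = 0 by rw [show m + 1 = n by omega]; exact Nat.mod_self n]
      rw [hg0]
      rw [show m - 4 = n - 5 by omega]
      rw [show n - 4 = (n - 5) + 1 from by omega, pow_succ] at heq
      linear_combination -heq
    · rw [show (m+1) % n = m + 1 from Nat.mod_eq_of_lt (by omega)]
      rw [hghigh (m+1) (by omega)]
      rw [show m + 1 - 4 = (m - 4) + 1 from by omega, pow_succ]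
      ring
  have hAx : (adjMat (Dj n j)).mulVec x - lam • x = 0 := by
    funext i
    simp only [Pi.sub_apply, Pi.smul_apply, smul_eq_mul, Pi.zero_apply]
    rw [key i]
    ring
  refine ⟨x, ?_, ?_, ?_, ?_⟩
  · intro hc
    have := congrFun hc ⟨0, by omega⟩
    have h0 : x ⟨0, by omega⟩ = g 0 := rfl
    rw [h0, hg0] at this
    simp at this
  · rw [Pi.le_def]
    intro i
    have : x i = g i.val := rfl
    rw [Pi.zero_apply, this]
    exact le_of_lt (hgpos i.val)
  · rw [hAx]
  · rw [hAx]
    simp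

lemma PiChar (n j : ℕ) (hn : 4 ≤ n) (hj1 : 3 ≤ j) (hj2 : j ≤ n - 1) (lam : ℝ) :
    isComplEig (adjMat (Dj n j)) lam ↔
      (lam = 0 ∨ lam = 1 ∨ (1 < lam ∧ (lam ^ 2 - 1) ^ 2 * lam ^ (n - 4) = 1)) := by
  haveI : NeZero n := ⟨by omega⟩
  constructor
  · intro h
    by_cases hlam0 : lam = 0
    · exact Or.inl hlam0
    by_cases hlam1 : lam = 1
    · exact Or.inr (Or.inl hlam1)
    refine Or.inr (Or.inr ?_)
    classical
    obtain ⟨x, hx0, hxn, hy, horth⟩ := h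
    have hxnn : ∀ i, 0 ≤ x i := fun i => by
      have := Pi.le_def.mp hxn i
      simpa using this
    have hzero : ∀ i : Fin n, x i ≠ 0 → (adjMat (Dj n j)).mulVec x i = lam * x i := by
      intro i hxi
      have hterm : ∀ k ∈ Finset.univ, (0:ℝ) ≤ x k * ((adjMat (Dj n j)).mulVec x - lam • x) k := by
        intro k _
        apply mul_nonneg (hxnn k)
        have := Pi.le_def.mp hy k
        simpa using this
      have h0 := (Finset.sum_eq_zero_iff_of_nonneg hterm).mp horth i (Finset.mem_univ i)
      have h1 : ((adjMat (Dj n j)).mulVec x - lam • x) i = 0 := by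
        rcases mul_eq_zero.mp h0 with h | h
        · exact absurd h hxi
        · exact h
      simp only [Pi.sub_apply, Pi.smul_apply, smul_eq_mul] at h1
      linarith
    set X : ℕ → ℝ := fun m => x ((m : ℕ) : Fin n) with hXdef
    have hXnn : ∀ m, 0 ≤ X m := fun m => hxnn _
    have hXmod : ∀ m, X m = X (m % n) := by
      intro m
      rw [hXdef]
      dsimp only
      congr 1
      ext
      rw [Fin.val_natCast, Fin.val_natCast, Nat.mod_mod_of_dvd m dvd_rfl]
    have eq_at : ∀ m : ℕ, m < n → X m ≠ 0 →
        X (m+1) + (if m = 1 then X 0 else 0) + (if m = j then X (j-1) else 0) = lam * X m := by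
      intro m hmlt hXm
      have hm := mulVec_formulaN n j hn hj1 hj2 x m
      rw [Nat.mod_eq_of_lt hmlt] at hm
      have h2 := hzero ((m : ℕ) : Fin n) hXm
      rw [hm] at h2
      exact h2
    obtain ⟨i0, hi0⟩ := Function.ne_iff.mp hx0
    have hi0' : x i0 ≠ 0 := by simpa using hi0
    have hp0 : 0 < x i0 := lt_of_le_of_ne (hxnn i0) (Ne.symm hi0')
    have hm0 : 0 < X i0.val := by
      rw [hXdef]
      dsimp only
      rw [Fin.cast_val_eq_self]
      exact hp0
    have hlpos : 0 < lam := by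
      by_contra hcon
      push_neg at hcon
      have hlt : lam < 0 := lt_of_le_of_ne hcon hlam0
      have h2 := mulVec_nonneg (Dj n j) x hxnn i0
      have h3 := hzero i0 hi0'
      nlinarith
    have step' : ∀ m, m < n → m ≠ 1 → m ≠ j → 0 < X m → X (m+1) = lam * X m := by
      intro m h1 h2 h3 h4
      have h5 := eq_at m h1 (ne_of_gt h4)
      rw [if_neg h2, if_neg h3] at h5
      linarith
    have chain : ∀ a k : ℕ, (∀ m, a ≤ m → m < a + k → (m < n ∧ m ≠ 1 ∧ m ≠ j)) →
        0 < X a → X (a + k) = lam ^ k * X a := by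
      intro a k
      induction k with
      | zero => intro _ _; simp
      | succ k ih =>
        intro hcond hpos
        have h1 := ih (fun m hm hm2 => hcond m hm (by omega)) hpos
        have hpk : 0 < X (a + k) := by
          rw [h1]
          exact mul_pos (pow_pos hlpos k) hpos
        obtain ⟨hA, hB, hC⟩ := hcond (a+k) (by omega) (by omega)
        have h2 := step' (a+k) hA hB hC hpk
        rw [show a + (k+1) = (a + k) + 1 by omega, h2, h1, pow_succ]
        ring
    have hsucc_mod : ∀ m : ℕ, (m + 1) % n = (m % n + 1) % n := by
      intro m
      conv_lhs => rw [Nat.add_mod]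
      rw [Nat.mod_eq_of_lt (show 1 < n by omega)]
    have hX1orXj : 0 < X 1 ∨ 0 < X j := by
      by_contra hcon
      push_neg at hcon
      have h1 : X 1 = 0 := le_antisymm hcon.1 (hXnn 1)
      have h2 : X j = 0 := le_antisymm hcon.2 (hXnn j)
      have prop : ∀ m, 0 < X m → 0 < X (m+1) := by
        intro m hm
        have hmlt : m % n < n := Nat.mod_lt _ (by omega)
        by_cases hc1 : m % n = 1
        · exfalso
          rw [hXmod m, hc1, h1] at hm
          exact lt_irrefl 0 hm
        by_cases hc2 : m % n = j
        · exfalso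
          rw [hXmod m, hc2, h2] at hm
          exact lt_irrefl 0 hm
        · have hstep := step' (m % n) hmlt hc1 hc2 (by rw [← hXmod]; exact hm)
          have heqX : X (m+1) = X (m % n + 1) := by
            rw [hXmod (m+1), hXmod (m % n + 1), hsucc_mod m]
          rw [heqX, hstep, ← hXmod]
          exact mul_pos hlpos hm
      have hall : ∀ k, 0 < X (i0.val + k) := by
        intro k
        induction k with
        | zero => simpa using hm0
        | succ k ih =>
          rw [show i0.val + (k+1) = (i0.val + k) + 1 by omega]
          exact prop _ ih
      have hfin := hall (n + 1 - i0.val)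
      have hlt := i0.isLt
      rw [show i0.val + (n + 1 - i0.val) = n + 1 by omega] at hfin
      rw [hXmod (n+1), Nat.add_mod_left, Nat.mod_eq_of_lt (by omega), h1] at hfin
      exact lt_irrefl 0 hfin
    have hwrap : X n = X 0 := by
      rw [hXmod n, Nat.mod_self]
    have hx1 : 0 < X 1 := by
      rcases hX1orXj with h | hxj
      · exact h
      by_contra hc
      have hX10 : X 1 = 0 := le_antisymm (not_lt.mp hc) (hXnn 1)
      have ej := eq_at j (by omega) (ne_of_gt hxj)
      rw [if_neg (by omega), if_pos rfl] at ej
      have hxj1 : 0 < X (j+1) := by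
        by_cases hjm : 0 < X (j-1)
        · have hstep := step' (j-1) (by omega) (by omega) (by omega) hjm
          rw [show (j-1)+1 = j by omega] at hstep
          rw [hstep] at ej
          have ej2 : X (j+1) = (lam^2 - 1) * X (j-1) := by
            linear_combination ej
          have hgt : 1 < lam := by
            by_contra hle
            push_neg at hle
            have hlt1 : lam < 1 := lt_of_le_of_ne hle hlam1
            have hfact : 0 < (1 - lam) * (1 + lam) := mul_pos (by linarith) (by linarith)
            nlinarith [hXnn (j+1), ej2, mul_pos hfact hjm]
          rw [ej2]
          exact mul_pos (by nlinarith) hjm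
        · have hjm0 : X (j-1) = 0 := le_antisymm (not_lt.mp hjm) (hXnn _)
          rw [hjm0] at ej
          have h' : X (j+1) = lam * X j := by linarith
          rw [h']
          exact mul_pos hlpos hxj
      have hx0pos : 0 < X 0 := by
        by_cases hce : j = n - 1
        · have hXj1 : X (j+1) = X 0 := by
            rw [hXmod (j+1), show (j+1) % n = 0 by rw [show j+1 = n by omega]; exact Nat.mod_self n]
          rwa [hXj1] at hxj1
        · have hchain3 : X (n-1) = lam^(n-2-j) * X (j+1) := by
            have := chain (j+1) (n-2-j) (by intro m hA hB; omega) hxj1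
            rwa [show (j+1) + (n-2-j) = n - 1 by omega] at this
          have hxl : 0 < X (n-1) := by
            rw [hchain3]
            exact mul_pos (pow_pos hlpos _) hxj1
          have elast := step' (n-1) (by omega) (by omega) (by omega) hxl
          rw [show (n-1)+1 = n by omega, hwrap] at elast
          rw [elast]
          exact mul_pos hlpos hxl
      have e1 := step' 0 (by omega) (by omega) (by omega) hx0pos
      norm_num at e1
      rw [hX10] at e1
      nlinarith [mul_pos hlpos hx0pos]
    -- Case: X 1 > 0
    by_cases hx0p : 0 < X 0
    · -- main case: compute everything
      have e1 : X (0+1) = lam * X 0 := step' 0 (by omega) (by omega) (by omega) hx0p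
      norm_num at e1
      have e2 := eq_at 1 (by omega) (ne_of_gt hx1)
      rw [if_pos rfl, if_neg (by omega)] at e2
      have e3 : X 2 = (lam^2 - 1) * X 0 := by
        have h12 : (1:ℕ) + 1 = 2 := rfl
        rw [h12] at e2
        linear_combination e2 + lam * e1
      have hgt : 1 < lam := by
        by_contra hle
        push_neg at hle
        have hlt1 : lam < 1 := lt_of_le_of_ne hle hlam1
        have hfact : 0 < (1 - lam) * (1 + lam) := mul_pos (by linarith) (by linarith)
        nlinarith [hXnn 2]
      have hx2 : 0 < X 2 := by
        rw [e3]
        exact mul_pos (by nlinarith) hx0p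
      refine ⟨hgt, ?_⟩
      have hchain1 : X j = lam ^ (j-2) * X 2 := by
        have := chain 2 (j-2) (by intro m hA hB; omega) hx2
        rwa [show 2 + (j-2) = j by omega] at this
      have hchain2 : X (j-1) = lam ^ (j-3) * X 2 := by
        have := chain 2 (j-3) (by intro m hA hB; omega) hx2
        rwa [show 2 + (j-3) = j - 1 by omega] at this
      have hxj : 0 < X j := by
        rw [hchain1]
        exact mul_pos (pow_pos hlpos _) hx2
      have ej := eq_at j (by omega) (ne_of_gt hxj)
      rw [if_neg (by omega), if_pos rfl] at ej
      by_cases hce : j = n - 1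
      · have hXj1 : X (j+1) = X 0 := by
          rw [hXmod (j+1), show (j+1) % n = 0 by rw [show j+1 = n by omega]; exact Nat.mod_self n]
        rw [hXj1, hchain1, hchain2, e3] at ej
        rw [show j - 3 = n - 4 by omega, show j - 2 = (n-4)+1 by omega, pow_succ] at ej
        have hfin : ((lam^2-1)^2 * lam^(n-4)) * X 0 = 1 * X 0 := by
          linear_combination -ej
        exact mul_right_cancel₀ (ne_of_gt hx0p) hfin
      · have ej2 : X (j+1) = (lam^2 - 1) * lam^(j-3) * X 2 := by
          rw [hchain1, hchain2] at ej
          rw [show j - 2 = (j-3) + 1 by omega, pow_succ] at ej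
          linear_combination ej
        have hxj1 : 0 < X (j+1) := by
          rw [ej2]
          exact mul_pos (mul_pos (by nlinarith) (pow_pos hlpos _)) hx2
        have hchain3 : X (n-1) = lam^(n-2-j) * X (j+1) := by
          have := chain (j+1) (n-2-j) (by intro m hA hB; omega) hxj1
          rwa [show (j+1) + (n-2-j) = n - 1 by omega] at this
        have hxl : 0 < X (n-1) := by
          rw [hchain3]
          exact mul_pos (pow_pos hlpos _) hxj1
        have elast := step' (n-1) (by omega) (by omega) (by omega) hxl
        rw [show (n-1)+1 = n by omega, hwrap, hchain3, ej2, e3] at elast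
        have hexp : lam * lam^(n-2-j) * lam^(j-3) = lam^(n-4) := by
          rw [show lam * lam^(n-2-j) * lam^(j-3) = lam^(1 + (n-2-j) + (j-3)) by
            rw [pow_add, pow_add, pow_one], show 1 + (n-2-j) + (j-3) = n - 4 by omega]
        have hfin : ((lam^2-1)^2 * lam^(n-4)) * X 0 = 1 * X 0 := by
          linear_combination -elast - (lam^2-1)^2 * X 0 * hexp
        exact mul_right_cancel₀ (ne_of_gt hx0p) hfin
    · -- X 0 = 0 : contradiction
      exfalso
      have hX00 : X 0 = 0 := le_antisymm (not_lt.mp hx0p) (hXnn 0)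
      have e2 := eq_at 1 (by omega) (ne_of_gt hx1)
      rw [if_pos rfl, if_neg (by omega), hX00] at e2
      have e3 : X 2 = lam * X 1 := by
        have h12 : (1:ℕ) + 1 = 2 := rfl
        rw [h12] at e2
        linarith
      have hx2 : 0 < X 2 := by
        rw [e3]
        exact mul_pos hlpos hx1
      have hchain1 : X j = lam ^ (j-2) * X 2 := by
        have := chain 2 (j-2) (by intro m hA hB; omega) hx2
        rwa [show 2 + (j-2) = j by omega] at this
      have hchain2 : X (j-1) = lam ^ (j-3) * X 2 := by
        have := chain 2 (j-3) (by intro m hA hB; omega) hx2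
        rwa [show 2 + (j-3) = j - 1 by omega] at this
      have hxj : 0 < X j := by
        rw [hchain1]
        exact mul_pos (pow_pos hlpos _) hx2
      have ej := eq_at j (by omega) (ne_of_gt hxj)
      rw [if_neg (by omega), if_pos rfl] at ej
      have ej2 : X (j+1) = (lam^2 - 1) * lam^(j-3) * X 2 := by
        rw [hchain1, hchain2] at ej
        rw [show j - 2 = (j-3) + 1 by omega, pow_succ] at ej
        linear_combination ej
      have hgt : 1 < lam := by
        by_contra hle
        push_neg at hle
        have hlt1 : lam < 1 := lt_of_le_of_ne hle hlam1
        have hfact : 0 < (1 - lam) * (1 + lam) := mul_pos (by linarith) (by linarith)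
        nlinarith [hXnn (j+1), ej2, mul_pos (mul_pos hfact (pow_pos hlpos (j-3))) hx2]
      have hxj1 : 0 < X (j+1) := by
        rw [ej2]
        exact mul_pos (mul_pos (by nlinarith) (pow_pos hlpos _)) hx2
      by_cases hce : j = n - 1
      · have hXj1 : X (j+1) = X 0 := by
          rw [hXmod (j+1), show (j+1) % n = 0 by rw [show j+1 = n by omega]; exact Nat.mod_self n]
        rw [hXj1, hX00] at hxj1
        exact lt_irrefl 0 hxj1
      · have hchain3 : X (n-1) = lam^(n-2-j) * X (j+1) := by
          have := chain (j+1) (n-2-j) (by intro m hA hB; omega) hxj1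
          rwa [show (j+1) + (n-2-j) = n - 1 by omega] at this
        have hxl : 0 < X (n-1) := by
          rw [hchain3]
          exact mul_pos (pow_pos hlpos _) hxj1
        have elast := step' (n-1) (by omega) (by omega) (by omega) hxl
        rw [show (n-1)+1 = n by omega, hwrap, hX00] at elast
        nlinarith [mul_pos hlpos hxl]
  · intro h
    rcases h with h | h | ⟨h1, h2⟩
    · rw [h]; exact bwd0 n j hn hj1 hj2
    · rw [h]; exact bwd1 n j hn hj1 hj2
    · exact bwdRoot n j hn hj1 hj2 lam h1 h2

theorem stmt19 (n j j' : ℕ) (hn : 4 ≤ n)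
    (hj1 : 3 ≤ j) (hj2 : j ≤ n - 1) (hj1' : 3 ≤ j') (hj2' : j' ≤ n - 1) :
    {lam : ℝ | isComplEig (adjMat (Dj n j)) lam} =
      {lam : ℝ | isComplEig (adjMat (Dj n j')) lam} := by
  ext lam
  simp only [Set.mem_setOf_eq]
  rw [PiChar n j hn hj1 hj2 lam, PiChar n j' hn hj1' hj2' lam]
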